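/- arXiv:1608.06395 — 3 statements merged into one kernel-verified Lean document; each statement's English description precedes it below -/
import Mathlib

section
/- If (λ₁, λ₂) ∈ (k^×)² satisfies at least two of the five Shapovalov conditions, then both λ₁ and λ₂ are 12th roots of unity. -/
/-!
Each Shapovalov condition says that a monomial `λ₁ ^ a * λ₂ ^ b` is a root of unity of small
order: `λ₁ ^ 3 = 1`, `(λ₁ ^ 2 * λ₂) ^ 6 = 1`, `(λ₁ ^ 3 * λ₂ ^ 2) ^ 2 = 1`, `(λ₁ * λ₂) ^ 12 = 1`
and `λ₂ = 1`. If two monomials with exponent vectors of determinant `D` are killed by `n` and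
`n'`, then `λ₁ ^ D` and `λ₂ ^ D` are products of their powers, so `λ₁` and `λ₂` are killed by
`D * lcm n n'`. For each of the ten pairs of conditions this number divides `12`.
-/

def TwoOfFive (P1 P2 P3 P4 P5 : Prop) : Prop :=
  (P1 ∧ P2) ∨ (P1 ∧ P3) ∨ (P1 ∧ P4) ∨ (P1 ∧ P5) ∨ (P2 ∧ P3) ∨
  (P2 ∧ P4) ∨ (P2 ∧ P5) ∨ (P3 ∧ P4) ∨ (P3 ∧ P5) ∨ (P4 ∧ P5)

section Monomials

variable {M : Type*} [CommMonoid M] {x y : M} {a b c d e n n' m : ℕ}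

theorem pow_eq_one_of_pow_eq_one_of_dvd (h : x ^ n = 1) (hnm : n ∣ m) : x ^ m = 1 := by
  obtain ⟨k, rfl⟩ := hnm
  rw [pow_mul, h, one_pow]

/-- `x ^ (a * d - b * c) = (x ^ a * y ^ b) ^ d * (x ^ c * y ^ d) ^ (-b)`, cleared of inverses. -/
theorem pow_mul_monomial_pow_eq (hdet : a * d = b * c + e) :
    x ^ e * (x ^ c * y ^ d) ^ b = (x ^ a * y ^ b) ^ d := by
  rw [mul_pow, mul_pow, ← pow_mul, ← pow_mul, ← pow_mul, ← pow_mul, ← mul_assoc, ← pow_add,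
    mul_comm c b, add_comm, ← hdet, mul_comm d b]

theorem pow_eq_one_of_monomials_pow_eq_one_left (hu : (x ^ a * y ^ b) ^ n = 1)
    (hv : (x ^ c * y ^ d) ^ n' = 1) (hm : (a * d - b * c) * n.lcm n' ∣ m) : x ^ m = 1 := by
  rcases Nat.eq_zero_or_pos (a * d - b * c) with hD | hD
  · rw [hD, zero_mul, zero_dvd_iff] at hm
    rw [hm, pow_zero]
  refine pow_eq_one_of_pow_eq_one_of_dvd ?_ hm
  have hdet : a * d = b * c + (a * d - b * c) := by omega
  have hu' := pow_eq_one_of_pow_eq_one_of_dvd hu (Nat.dvd_lcm_left n n')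
  have hv' := pow_eq_one_of_pow_eq_one_of_dvd hv (Nat.dvd_lcm_right n n')
  calc x ^ ((a * d - b * c) * n.lcm n')
      = (x ^ (a * d - b * c) * (x ^ c * y ^ d) ^ b) ^ n.lcm n' := by
        rw [mul_pow, pow_right_comm _ b, hv', one_pow, mul_one, pow_mul]
    _ = 1 := by
        rw [pow_mul_monomial_pow_eq hdet, ← pow_mul, mul_comm d, pow_mul, hu', one_pow]

theorem pow_eq_one_of_monomials_pow_eq_one (hu : (x ^ a * y ^ b) ^ n = 1)
    (hv : (x ^ c * y ^ d) ^ n' = 1) (hm : (a * d - b * c) * n.lcm n' ∣ m) :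
    x ^ m = 1 ∧ y ^ m = 1 := by
  refine ⟨pow_eq_one_of_monomials_pow_eq_one_left hu hv hm,
    pow_eq_one_of_monomials_pow_eq_one_left (x := y) (y := x) (a := d) (b := c) (c := b) (d := a)
      (n := n') (n' := n) ?_ ?_ ?_⟩
  · rwa [mul_comm]
  · rwa [mul_comm]
  · rwa [Nat.lcm_comm, mul_comm d, mul_comm c]

end Monomials

theorem stmt_5_general {k : Type*} [Field k]
    (ζ : k) (hζ : IsPrimitiveRoot ζ 12)
    (lam1 lam2 : k)
    (h : TwoOfFive (lam1 ∈ ({1, ζ ^ 8} : Set k))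
      (lam1 ^ 2 * lam2 ∈ ({-1, ζ ^ 10} : Set k))
      (lam1 ^ 3 * lam2 ^ 2 = -1)
      (lam1 * lam2 ∈ ({ζ, ζ ^ 4, ζ ^ 7} : Set k))
      (lam2 = 1)) :
    lam1 ^ 12 = 1 ∧ lam2 ^ 12 = 1 := by
  have root_pow {j n : ℕ} (hjn : 12 ∣ j * n) : (ζ ^ j) ^ n = 1 := by
    rwa [← pow_mul, hζ.pow_eq_one_iff_dvd]
  simp only [Set.mem_insert_iff, Set.mem_singleton_iff] at h
  have c1 : lam1 = 1 ∨ lam1 = ζ ^ 8 → (lam1 ^ 1 * lam2 ^ 0) ^ 3 = 1 := by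
    rw [pow_one, pow_zero, mul_one]
    rintro (rfl | rfl)
    exacts [one_pow 3, root_pow (by norm_num)]
  have c2 : lam1 ^ 2 * lam2 = -1 ∨ lam1 ^ 2 * lam2 = ζ ^ 10 → (lam1 ^ 2 * lam2 ^ 1) ^ 6 = 1 := by
    rw [pow_one]
    rintro (h2 | h2) <;> rw [h2]
    exacts [by norm_num, root_pow (by norm_num)]
  have c3 : lam1 ^ 3 * lam2 ^ 2 = -1 → (lam1 ^ 3 * lam2 ^ 2) ^ 2 = 1 := by
    intro h3; rw [h3]; norm_num
  have c4 : lam1 * lam2 = ζ ∨ lam1 * lam2 = ζ ^ 4 ∨ lam1 * lam2 = ζ ^ 7 →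
      (lam1 ^ 1 * lam2 ^ 1) ^ 12 = 1 := by
    rw [pow_one, pow_one]
    rintro (h4 | h4 | h4) <;> rw [h4]
    exacts [hζ.pow_eq_one, root_pow (by norm_num), root_pow (by norm_num)]
  have c5 : lam2 = 1 → (lam1 ^ 0 * lam2 ^ 1) ^ 1 = 1 := by
    rintro rfl; simp
  rcases h with ⟨h1, h2⟩ | ⟨h1, h3⟩ | ⟨h1, h4⟩ | ⟨h1, h5⟩ | ⟨h2, h3⟩ |
    ⟨h2, h4⟩ | ⟨h2, h5⟩ | ⟨h3, h4⟩ | ⟨h3, h5⟩ | ⟨h4, h5⟩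
  · exact pow_eq_one_of_monomials_pow_eq_one (c1 h1) (c2 h2) (by norm_num)
  · exact pow_eq_one_of_monomials_pow_eq_one (c1 h1) (c3 h3) (by norm_num)
  · exact pow_eq_one_of_monomials_pow_eq_one (c1 h1) (c4 h4) (by norm_num)
  · exact pow_eq_one_of_monomials_pow_eq_one (c1 h1) (c5 h5) (by norm_num)
  · exact pow_eq_one_of_monomials_pow_eq_one (c2 h2) (c3 h3) (by norm_num)
  · exact pow_eq_one_of_monomials_pow_eq_one (c2 h2) (c4 h4) (by norm_num)
  · exact pow_eq_one_of_monomials_pow_eq_one (c2 h2) (c5 h5) (by norm_num)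
  · exact pow_eq_one_of_monomials_pow_eq_one (c3 h3) (c4 h4) (by norm_num)
  · exact pow_eq_one_of_monomials_pow_eq_one (c3 h3) (c5 h5) (by norm_num)
  · exact pow_eq_one_of_monomials_pow_eq_one (c4 h4) (c5 h5) (by norm_num)

theorem stmt_5 {k : Type*} [Field k] [IsAlgClosed k] [CharZero k]
    (ζ : k) (hζ : IsPrimitiveRoot ζ 12)
    (lam1 lam2 : k) (hlam1 : lam1 ≠ 0) (hlam2 : lam2 ≠ 0)
    (h : TwoOfFive (lam1 ∈ ({1, ζ ^ 8} : Set k))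
      (lam1 ^ 2 * lam2 ∈ ({-1, ζ ^ 10} : Set k))
      (lam1 ^ 3 * lam2 ^ 2 = -1)
      (lam1 * lam2 ∈ ({ζ, ζ ^ 4, ζ ^ 7} : Set k))
      (lam2 = 1)) :
    lam1 ^ 12 = 1 ∧ lam2 ^ 12 = 1 :=
  stmt_5_general ζ hζ lam1 lam2 h
end

section
/- There are exactly 37 pairs (λ₁, λ₂) of 12th roots of unity satisfying at least two of the five Shapovalov conditions, and they are exactly the pairs listed as the families 𝕀₁₁ through 𝕀₄₇ in the paper (e.g. (1,ζ), (1,ζ^4), (1,ζ^7), (1,ζ^3), (1,ζ^9), (1,-1), (1,ζ^{10}), (ζ^8,ζ^5), (ζ^8,ζ^8), (ζ^8,ζ^{11}), (ζ^8,ζ^3), (ζ^8,ζ^9), (ζ^8,ζ^2), (ζ^8,-1), (ζ^{11},ζ^8), (ζ^5,ζ^8), (ζ^4,ζ^9), (ζ^9,ζ^4), (-1,-1), (ζ^2,ζ^2), (-1,ζ^{10}), (ζ^{10},-1), (ζ^2,-1), (ζ^4,ζ^3), (ζ^3,ζ^4), and (ζ^j, 1) for j = 1,…,11, and (1,1)).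 -/
namespace IsPrimitiveRoot

section CommMonoid

variable {M : Type*} [CommMonoid M] {ζ : M} {n : ℕ} [NeZero n]

theorem pow_eq_pow_iff_natCast_eq (hζ : IsPrimitiveRoot ζ n) {a b : ℕ} :
    ζ ^ a = ζ ^ b ↔ (a : ZMod n) = b := by
  rw [ZMod.natCast_eq_natCast_iff, hζ.eq_orderOf,
    (hζ.isOfFinOrder (NeZero.ne n)).pow_eq_pow_iff_modEq]

theorem pow_val_injective (hζ : IsPrimitiveRoot ζ n) :
    Function.Injective fun i : ZMod n => ζ ^ i.val :=
  fun i j h => ZMod.val_injective n (hζ.pow_inj i.val_lt j.val_lt h)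

end CommMonoid

variable {R : Type*} [CommRing R] [IsDomain R] {ζ : R} {n : ℕ} [NeZero n]

theorem setOf_pow_eq_one_prod_eq_image (hζ : IsPrimitiveRoot ζ n) (P : R × R → Prop) :
    {p : R × R | p.1 ^ n = 1 ∧ p.2 ^ n = 1 ∧ P p} =
      (fun q : ZMod n × ZMod n => (ζ ^ q.1.val, ζ ^ q.2.val)) ''
        {q | P (ζ ^ q.1.val, ζ ^ q.2.val)} := by
  ext ⟨x, y⟩
  constructor
  · rintro ⟨hx, hy, hP⟩
    obtain ⟨a, ha, rfl⟩ := hζ.eq_pow_of_pow_eq_one hx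
    obtain ⟨b, hb, rfl⟩ := hζ.eq_pow_of_pow_eq_one hy
    exact ⟨(a, b), by simpa [ZMod.val_cast_of_lt ha, ZMod.val_cast_of_lt hb],
      by simp [ZMod.val_cast_of_lt ha, ZMod.val_cast_of_lt hb]⟩
  · rintro ⟨q, hP, hq⟩
    rw [← hq]
    exact ⟨by rw [pow_right_comm, hζ.pow_eq_one, one_pow],
      by rw [pow_right_comm, hζ.pow_eq_one, one_pow], hP⟩

theorem pow_six_eq_neg_one (hζ : IsPrimitiveRoot ζ 12) : ζ ^ 6 = -1 :=
  (hζ.pow (by norm_num) (by norm_num : 12 = 6 * 2)).eq_neg_one_of_two_right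

end IsPrimitiveRoot

theorem image_pow_val_prod_setOf_snd_eq_zero {M : Type*} [Monoid M] (ζ : M) (n : ℕ)
    [NeZero n] :
    (fun q : ZMod n × ZMod n => (ζ ^ q.1.val, ζ ^ q.2.val)) '' {q | q.2 = 0} =
      {p | ∃ j < n, p = (ζ ^ j, 1)} := by
  ext p
  constructor
  · rintro ⟨⟨i, _⟩, rfl : _ = (0 : ZMod n), rfl⟩
    exact ⟨i.val, i.val_lt, by simp⟩
  · rintro ⟨j, hj, rfl⟩
    exact ⟨(j, 0), rfl, by simp [ZMod.val_cast_of_lt hj]⟩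

/-- `(λ₁, λ₂) = (ζ ^ i, ζ ^ j)` satisfies two of C1–C5, read on the exponents. -/
def ShapovalovExponents (i j : ZMod 12) : Prop :=
  TwoOfFive (i = 0 ∨ i = 8) (2 * i + j = 6 ∨ 2 * i + j = 10) (3 * i + 2 * j = 6)
    (i + j = 1 ∨ i + j = 4 ∨ i + j = 7) (j = 0)

instance (i j : ZMod 12) : Decidable (ShapovalovExponents i j) := by
  unfold ShapovalovExponents TwoOfFive; infer_instance

theorem twoOfFive_pow_val_iff {k : Type*} [CommRing k] [IsDomain k] {ζ : k}
    (hζ : IsPrimitiveRoot ζ 12) (i j : ZMod 12) :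
    TwoOfFive (ζ ^ i.val ∈ ({1, ζ ^ 8} : Set k))
      ((ζ ^ i.val) ^ 2 * ζ ^ j.val ∈ ({-1, ζ ^ 10} : Set k))
      ((ζ ^ i.val) ^ 3 * (ζ ^ j.val) ^ 2 = -1)
      (ζ ^ i.val * ζ ^ j.val ∈ ({ζ, ζ ^ 4, ζ ^ 7} : Set k))
      (ζ ^ j.val = 1) ↔ ShapovalovExponents i j := by
  have key (a b : ℕ) : ζ ^ a = ζ ^ b ↔ (a : ZMod 12) = b := hζ.pow_eq_pow_iff_natCast_eq
  have eq_one (a : ℕ) : ζ ^ a = 1 ↔ (a : ZMod 12) = 0 := by simpa using key a 0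
  have eq_neg_one (a : ℕ) : ζ ^ a = -1 ↔ (a : ZMod 12) = 6 := by
    simpa [hζ.pow_six_eq_neg_one] using key a 6
  have eq_self (a : ℕ) : ζ ^ a = ζ ↔ (a : ZMod 12) = 1 := by simpa using key a 1
  simp only [Set.mem_insert_iff, Set.mem_singleton_iff, ← pow_mul', ← pow_add, key, eq_one,
    eq_neg_one, eq_self]
  push_cast [ZMod.natCast_val, ZMod.cast_id']
  rfl

def shapovalovSporadicExponents : Finset (ZMod 12 × ZMod 12) :=
  {(0, 1), (0, 4), (0, 7), (0, 3), (0, 9), (0, 6), (0, 10), (8, 5), (8, 8), (8, 11), (8, 3),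
    (8, 9), (8, 2), (8, 6), (11, 8), (5, 8), (4, 9), (9, 4), (6, 6), (2, 2), (6, 10), (10, 6),
    (2, 6), (4, 3), (3, 4)}

theorem setOf_shapovalovExponents :
    {q : ZMod 12 × ZMod 12 | ShapovalovExponents q.1 q.2} =
      ↑shapovalovSporadicExponents ∪ {q | q.2 = 0} := by
  ext ⟨i, j⟩
  simp only [Set.mem_ofPred_eq, Set.mem_union, Finset.mem_coe]
  revert i j
  decide

theorem ncard_setOf_shapovalovExponents :
    {q : ZMod 12 × ZMod 12 | ShapovalovExponents q.1 q.2}.ncard = 37 := by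
  rw [← Finset.coe_filter_univ, Set.ncard_coe_finset]
  decide

theorem stmt_6_general {k : Type*} [Field k] (ζ : k) (hζ : IsPrimitiveRoot ζ 12) :
    {p : k × k | p.1 ^ 12 = 1 ∧ p.2 ^ 12 = 1 ∧
        TwoOfFive (p.1 ∈ ({1, ζ ^ 8} : Set k))
          (p.1 ^ 2 * p.2 ∈ ({-1, ζ ^ 10} : Set k))
          (p.1 ^ 3 * p.2 ^ 2 = -1)
          (p.1 * p.2 ∈ ({ζ, ζ ^ 4, ζ ^ 7} : Set k))
          (p.2 = 1)} =
      ({(1, ζ), (1, ζ ^ 4), (1, ζ ^ 7), (1, ζ ^ 3), (1, ζ ^ 9), (1, -1), (1, ζ ^ 10),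
        (ζ ^ 8, ζ ^ 5), (ζ ^ 8, ζ ^ 8), (ζ ^ 8, ζ ^ 11), (ζ ^ 8, ζ ^ 3), (ζ ^ 8, ζ ^ 9),
        (ζ ^ 8, ζ ^ 2), (ζ ^ 8, -1), (ζ ^ 11, ζ ^ 8), (ζ ^ 5, ζ ^ 8), (ζ ^ 4, ζ ^ 9),
        (ζ ^ 9, ζ ^ 4), (-1, -1), (ζ ^ 2, ζ ^ 2), (-1, ζ ^ 10), (ζ ^ 10, -1),
        (ζ ^ 2, -1), (ζ ^ 4, ζ ^ 3), (ζ ^ 3, ζ ^ 4)} : Set (k × k)) ∪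
        {p : k × k | ∃ j < 12, p = (ζ ^ j, 1)} ∧
    Set.ncard ({p : k × k | p.1 ^ 12 = 1 ∧ p.2 ^ 12 = 1 ∧
        TwoOfFive (p.1 ∈ ({1, ζ ^ 8} : Set k))
          (p.1 ^ 2 * p.2 ∈ ({-1, ζ ^ 10} : Set k))
          (p.1 ^ 3 * p.2 ^ 2 = -1)
          (p.1 * p.2 ∈ ({ζ, ζ ^ 4, ζ ^ 7} : Set k))
          (p.2 = 1)}) = 37 := by
  simp only [hζ.setOf_pow_eq_one_prod_eq_image, twoOfFive_pow_val_iff hζ]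
  constructor
  · rw [setOf_shapovalovExponents, Set.image_union, image_pow_val_prod_setOf_snd_eq_zero]
    congr 1
    simp only [shapovalovSporadicExponents, Finset.coe_insert, Finset.coe_singleton,
      Set.image_insert_eq, Set.image_singleton, ZMod.val_zero, ZMod.val_one_eq_one_mod,
      ZMod.val_ofNat, Nat.reduceMod, pow_zero, pow_one, hζ.pow_six_eq_neg_one]
  · have hinj := hζ.pow_val_injective.prodMap hζ.pow_val_injective
    exact (Set.ncard_image_of_injective _ hinj).trans ncard_setOf_shapovalovExponents

theorem stmt_6 {k : Type*} [Field k] [IsAlgClosed k] [CharZero k]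
    (ζ : k) (hζ : IsPrimitiveRoot ζ 12) :
    {p : k × k | p.1 ^ 12 = 1 ∧ p.2 ^ 12 = 1 ∧
        TwoOfFive (p.1 ∈ ({1, ζ ^ 8} : Set k))
          (p.1 ^ 2 * p.2 ∈ ({-1, ζ ^ 10} : Set k))
          (p.1 ^ 3 * p.2 ^ 2 = -1)
          (p.1 * p.2 ∈ ({ζ, ζ ^ 4, ζ ^ 7} : Set k))
          (p.2 = 1)} =
      ({(1, ζ), (1, ζ ^ 4), (1, ζ ^ 7), (1, ζ ^ 3), (1, ζ ^ 9), (1, -1), (1, ζ ^ 10),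
        (ζ ^ 8, ζ ^ 5), (ζ ^ 8, ζ ^ 8), (ζ ^ 8, ζ ^ 11), (ζ ^ 8, ζ ^ 3), (ζ ^ 8, ζ ^ 9),
        (ζ ^ 8, ζ ^ 2), (ζ ^ 8, -1), (ζ ^ 11, ζ ^ 8), (ζ ^ 5, ζ ^ 8), (ζ ^ 4, ζ ^ 9),
        (ζ ^ 9, ζ ^ 4), (-1, -1), (ζ ^ 2, ζ ^ 2), (-1, ζ ^ 10), (ζ ^ 10, -1),
        (ζ ^ 2, -1), (ζ ^ 4, ζ ^ 3), (ζ ^ 3, ζ ^ 4)} : Set (k × k)) ∪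
        {p : k × k | ∃ j < 12, p = (ζ ^ j, 1)} ∧
    Set.ncard ({p : k × k | p.1 ^ 12 = 1 ∧ p.2 ^ 12 = 1 ∧
        TwoOfFive (p.1 ∈ ({1, ζ ^ 8} : Set k))
          (p.1 ^ 2 * p.2 ∈ ({-1, ζ ^ 10} : Set k))
          (p.1 ^ 3 * p.2 ^ 2 = -1)
          (p.1 * p.2 ∈ ({ζ, ζ ^ 4, ζ ^ 7} : Set k))
          (p.2 = 1)}) = 37 :=
  stmt_6_general ζ hζ
end

section
/- Consider the 11-dimensional vector space V with basis v_{0,0}, v_{0,1}, v_{1,1}, v_{2,1}, v_{2,2}, v_{3,2}, v_{4,2}, v_{3,3}, v_{4,3}, v_{5,3}, v_{5,4} and operators E₁, E₂, F₁, F₂ defined by Table 'caso 11' of the paper (e.g. E₂v_{0,0} = v_{0,1}, E₁v_{0,1} = v_{1,1}, F₂v_{0,1} = λ(g₂)(ζ^{11}−1)v_{0,0}, F₁v_{1,1} = λ(g₁)q₁₂(ζ−1)v_{0,1}, etc.) together with the Γ-action by weights λ·χ₁^iχ₂^j on v_{i,j}. Then V is a simple module: every nonzero subspace invariant under E₁,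 E₂, F₁, F₂ and the diagonal Γ-action equals V. -/
/-!
The diagonal operator `D` has distinct eigenvalues on the basis, so evaluating at `D` the Lagrange
polynomial that is `1` at `c i` and `0` at the other weights projects onto the line through `b i`.
Hence a nonzero `D`-stable subspace contains a basis vector. From there the `E`'s climb to the
highest weight vector `v₅₄ = b 10`, and from `v₅₄` the `F`'s descend to every basis vector; all
coefficients met on the way are nonzero because `ζ` is a primitive 12th root of unity.
-/

open Polynomial

theorem IsPrimitiveRoot.pow_ne_neg_one {R : Type*} [CommRing R] {ζ : R} {n m : ℕ}
    (hζ : IsPrimitiveRoot ζ n) (h : ¬ n ∣ 2 * m) : ζ ^ m ≠ -1 := fun h' =>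
  h <| (hζ.pow_eq_one_iff_dvd _).mp <| by rw [pow_mul', h', neg_one_sq]

section

variable {K V : Type*} [Field K] [AddCommGroup V] [Module K V]

theorem Submodule.mem_of_apply_mem_of_eq_smul {W : Submodule K V} {L : V →ₗ[K] V}
    (hL : ∀ x ∈ W, L x ∈ W) {u v : V} {s : K} (hs : s ≠ 0) (h : L u = s • v) (hu : u ∈ W) :
    v ∈ W :=
  (W.smul_mem_iff hs).mp (h ▸ hL u hu)

theorem Submodule.aeval_apply_mem {W : Submodule K V} {D : Module.End K V}
    (hD : ∀ x ∈ W, D x ∈ W) (p : K[X]) {x : V} (hx : x ∈ W) : aeval D p x ∈ W := by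
  induction p using Polynomial.induction_on generalizing x with
  | C a => simpa [Module.algebraMap_end_apply] using W.smul_mem a hx
  | add p q hp hq => simpa using W.add_mem (hp hx) (hq hx)
  | monomial n a ih =>
    rw [pow_succ, ← mul_assoc, map_mul, Module.End.mul_apply, aeval_X]
    exact ih (hD x hx)

namespace Module.Basis

variable {ι : Type*} (b : Basis ι K V)

theorem eq_top_of_forall_mem {W : Submodule K V} (h : ∀ i, b i ∈ W) : W = ⊤ := by
  rw [eq_top_iff, ← b.span_eq, Submodule.span_le]
  rintro _ ⟨i, rfl⟩
  exact h i

variable [Fintype ι] [DecidableEq ι] {D : Module.End K V} {c : ι → K}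

theorem aeval_lagrangeBasis_apply (hc : Function.Injective c)
    (hD : ∀ i, D (b i) = c i • b i) (i : ι) (x : V) :
    aeval D (Lagrange.basis Finset.univ c i) x = b.repr x i • b i := by
  conv_lhs => rw [← b.sum_repr x]
  simp only [map_sum, map_smul, Module.End.aeval_apply_of_mem_apply_eq_smul (hD _), smul_smul]
  rw [Finset.sum_eq_single i (fun j _ hji => ?_) (by simp),
    Lagrange.eval_basis_self hc.injOn (Finset.mem_univ i), mul_one]
  rw [Lagrange.eval_basis_of_ne hji.symm (Finset.mem_univ j), mul_zero, zero_smul]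

theorem mem_of_repr_ne_zero (hc : Function.Injective c) (hD : ∀ i, D (b i) = c i • b i)
    {W : Submodule K V} (hW : ∀ x ∈ W, D x ∈ W) {x : V} (hx : x ∈ W) {i : ι}
    (hi : b.repr x i ≠ 0) : b i ∈ W :=
  (W.smul_mem_iff hi).mp <| b.aeval_lagrangeBasis_apply hc hD i x ▸ W.aeval_apply_mem hW _ hx

theorem exists_mem_of_ne_bot (hc : Function.Injective c) (hD : ∀ i, D (b i) = c i • b i)
    {W : Submodule K V} (hW : ∀ x ∈ W, D x ∈ W) (hbot : W ≠ ⊥) : ∃ i, b i ∈ W := by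
  obtain ⟨x, hx, hx0⟩ := W.ne_bot_iff.mp hbot
  obtain ⟨i, hi⟩ := Finsupp.ne_iff.mp ((b.repr.map_ne_zero_iff).mpr hx0)
  exact ⟨i, b.mem_of_repr_ne_zero hc hD hW hx hi⟩

end Module.Basis

end

namespace Caso11

variable {k V : Type*} [Field k] [AddCommGroup V] [Module k V]

/- Table 'caso 11' of the paper: images of the basis vectors, in the order
`v₀₀, v₀₁, v₁₁, v₂₁, v₂₂, v₃₂, v₄₂, v₃₃, v₄₃, v₅₃, v₅₄`; the tables of `F₁, F₂` omit the factors
`λ(g₁), λ(g₂)`. -/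
def tableE1 (ζ q12 : k) (v : Fin 11 → V) : Fin 11 → V :=
  ![0, v 2, v 3, 0, v 5, v 6, 0, (q12 * ζ ^ 8 * (ζ ^ 3 - 1) / 2) • v 8, v 9, 0, 0]

def tableE2 (v : Fin 11 → V) : Fin 11 → V :=
  ![v 1, 0, 0, v 4, 0, v 7, v 8, 0, 0, v 10, 0]

def tableF1 (ζ q12 : k) (v : Fin 11 → V) : Fin 11 → V :=
  ![0, 0, (q12 * (ζ - 1)) • v 1, (q12 * ζ ^ 8 * (1 + ζ ^ 3)) • v 2, 0,
    (q12 ^ 2 * (ζ ^ 2 - 1)) • v 4, (2 * q12 ^ 2 * (ζ ^ 2 - 1)) • v 5, 0,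
    (2 * q12 ^ 2 * (ζ ^ 2 - 1)) • v 7, (q12 ^ 3 * ζ ^ 8 * (1 - ζ ^ 11)) • v 8, 0]

def tableF2 (ζ q21 : k) (v : Fin 11 → V) : Fin 11 → V :=
  ![0, (ζ ^ 11 - 1) • v 0, 0, 0, (q21 ^ 2 * (1 - ζ)) • v 3, 0, 0,
    (q21 ^ 3 * (ζ ^ 2 - 1)) • v 5, (q21 ^ 4 * (ζ ^ 3 - 1)) • v 6, 0,
    (q21 ^ 5 * (ζ ^ 11 + 1)) • v 9]

variable [NeZero (2 : k)] {ζ : k} {b : Module.Basis (Fin 11) k V} {W : Submodule k V}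

theorem basis_ten_mem_of_basis_mem (hζ : IsPrimitiveRoot ζ 12) {q12 : k} (hq12 : q12 ≠ 0)
    {E1 E2 : V →ₗ[k] V}
    (hE1 : ∀ i, E1 (b i) = tableE1 ζ q12 b i) (hE2 : ∀ i, E2 (b i) = tableE2 b i)
    (hE1W : ∀ x ∈ W, E1 x ∈ W) (hE2W : ∀ x ∈ W, E2 x ∈ W) {i : Fin 11} (hi : b i ∈ W) :
    b 10 ∈ W := by
  have up1 (j : Fin 11) (hj : b j ∈ W) : tableE1 ζ q12 b j ∈ W := hE1 j ▸ hE1W _ hj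
  have up2 (j : Fin 11) (hj : b j ∈ W) : tableE2 b j ∈ W := hE2 j ▸ hE2W _ hj
  have h9 : b 9 ∈ W → b 10 ∈ W := up2 9
  have h8 : b 8 ∈ W → b 10 ∈ W := h9 ∘ up1 8
  have h7 : b 7 ∈ W → b 10 ∈ W := h8 ∘ W.mem_of_apply_mem_of_eq_smul hE1W
    (by simp [hq12, hζ.ne_zero, two_ne_zero, sub_eq_zero, hζ.pow_ne_one_of_pos_of_lt]) (hE1 7)
  have h6 : b 6 ∈ W → b 10 ∈ W := h8 ∘ up2 6
  have h5 : b 5 ∈ W → b 10 ∈ W := h6 ∘ up1 5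
  have h4 : b 4 ∈ W → b 10 ∈ W := h5 ∘ up1 4
  have h3 : b 3 ∈ W → b 10 ∈ W := h4 ∘ up2 3
  have h2 : b 2 ∈ W → b 10 ∈ W := h3 ∘ up1 2
  have h1 : b 1 ∈ W → b 10 ∈ W := h2 ∘ up1 1
  have h0 : b 0 ∈ W → b 10 ∈ W := h1 ∘ up2 0
  fin_cases i
  exacts [h0 hi, h1 hi, h2 hi, h3 hi, h4 hi, h5 hi, h6 hi, h7 hi, h8 hi, h9 hi, hi]

theorem basis_mem_of_basis_ten_mem (hζ : IsPrimitiveRoot ζ 12) {q12 q21 lg1 lg2 : k}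
    (hq12 : q12 ≠ 0) (hq21 : q21 ≠ 0) (hlg1 : lg1 ≠ 0) (hlg2 : lg2 ≠ 0) {F1 F2 : V →ₗ[k] V}
    (hF1 : ∀ i, F1 (b i) = lg1 • tableF1 ζ q12 b i)
    (hF2 : ∀ i, F2 (b i) = lg2 • tableF2 ζ q21 b i)
    (hF1W : ∀ x ∈ W, F1 x ∈ W) (hF2W : ∀ x ∈ W, F2 x ∈ W) (h10 : b 10 ∈ W) (i : Fin 11) :
    b i ∈ W := by
  have hζ0 : ζ ≠ 0 := hζ.ne_zero (by norm_num)
  have hζ1 : ζ ≠ 1 := hζ.ne_one (by norm_num)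
  have hζ3 : ζ ^ 3 ≠ -1 := hζ.pow_ne_neg_one (by norm_num)
  have hζ11 : ζ ^ 11 ≠ -1 := hζ.pow_ne_neg_one (by norm_num)
  have down {L : V →ₗ[k] V} (hL : ∀ x ∈ W, L x ∈ W) {lg s : k} (hlg : lg ≠ 0) (hs : s ≠ 0)
      {u v : V} (h : L u = lg • s • v) : u ∈ W → v ∈ W :=
    W.mem_of_apply_mem_of_eq_smul hL (mul_ne_zero hlg hs) (h.trans (smul_smul _ _ _))
  have h9 := down hF2W hlg2 ?_ (hF2 10) h10
  have h8 := down hF1W hlg1 ?_ (hF1 9) h9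
  have h7 := down hF1W hlg1 ?_ (hF1 8) h8
  have h6 := down hF2W hlg2 ?_ (hF2 8) h8
  have h5 := down hF2W hlg2 ?_ (hF2 7) h7
  have h4 := down hF1W hlg1 ?_ (hF1 5) h5
  have h3 := down hF2W hlg2 ?_ (hF2 4) h4
  have h2 := down hF1W hlg1 ?_ (hF1 3) h3
  have h1 := down hF1W hlg1 ?_ (hF1 2) h2
  have h0 := down hF2W hlg2 ?_ (hF2 1) h1
  · fin_cases i <;> assumption
  all_goals simp [hq12, hq21, hζ0, hζ1, hζ3, hζ11, two_ne_zero, sub_eq_zero,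
    eq_comm (a := (1 : k)), add_eq_zero_iff_eq_neg, neg_eq_iff_eq_neg, hζ.pow_ne_one_of_pos_of_lt]

end Caso11

theorem stmt_18_general {k : Type*} [Field k] [CharZero k]
    (ζ : k) (hζ : IsPrimitiveRoot ζ 12)
    (q12 q21 : k) (hq12 : q12 ≠ 0) (hq21 : q21 ≠ 0)
    (lg1 lg2 : k) (hlg1 : lg1 ≠ 0) (hlg2 : lg2 ≠ 0)
    {V : Type*} [AddCommGroup V] [Module k V]
    -- basis indexed by v₀₀, v₀₁, v₁₁, v₂₁, v₂₂, v₃₂, v₄₂, v₃₃, v₄₃, v₅₃, v₅₄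
    (b : Module.Basis (Fin 11) k V)
    (E1 E2 F1 F2 D : V →ₗ[k] V)
    (hE1 : ∀ i : Fin 11, E1 (b i) =
      ![0, b 2, b 3, 0, b 5, b 6, 0, (q12 * ζ ^ 8 * (ζ ^ 3 - 1) / 2) • b 8, b 9, 0, 0] i)
    (hE2 : ∀ i : Fin 11, E2 (b i) =
      ![b 1, 0, 0, b 4, 0, b 7, b 8, 0, 0, b 10, 0] i)
    (hF1 : ∀ i : Fin 11, F1 (b i) = lg1 •
      ![0, 0, (q12 * (ζ - 1)) • b 1, (q12 * ζ ^ 8 * (1 + ζ ^ 3)) • b 2, 0,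
        (q12 ^ 2 * (ζ ^ 2 - 1)) • b 4, (2 * q12 ^ 2 * (ζ ^ 2 - 1)) • b 5, 0,
        (2 * q12 ^ 2 * (ζ ^ 2 - 1)) • b 7, (q12 ^ 3 * ζ ^ 8 * (1 - ζ ^ 11)) • b 8, 0] i)
    (hF2 : ∀ i : Fin 11, F2 (b i) = lg2 •
      ![0, (ζ ^ 11 - 1) • b 0, 0, 0, (q21 ^ 2 * (1 - ζ)) • b 3, 0, 0,
        (q21 ^ 3 * (ζ ^ 2 - 1)) • b 5, (q21 ^ 4 * (ζ ^ 3 - 1)) • b 6, 0,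
        (q21 ^ 5 * (ζ ^ 11 + 1)) • b 9] i)
    -- the diagonal `Γ`-action: the eleven weights `λχ₁ⁱχ₂ʲ` are distinct
    (c : Fin 11 → k) (hc : Function.Injective c)
    (hD : ∀ i : Fin 11, D (b i) = c i • b i) :
    ∀ W : Submodule k V,
      (∀ x ∈ W, E1 x ∈ W) → (∀ x ∈ W, E2 x ∈ W) →
      (∀ x ∈ W, F1 x ∈ W) → (∀ x ∈ W, F2 x ∈ W) →
      (∀ x ∈ W, D x ∈ W) →
      W = ⊥ ∨ W = ⊤ := by
  intro W hE1W hE2W hF1W hF2W hDW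
  refine or_iff_not_imp_left.mpr fun hW => b.eq_top_of_forall_mem ?_
  obtain ⟨i, hi⟩ := b.exists_mem_of_ne_bot hc hD hDW hW
  exact Caso11.basis_mem_of_basis_ten_mem hζ hq12 hq21 hlg1 hlg2 hF1 hF2 hF1W hF2W
    (Caso11.basis_ten_mem_of_basis_mem hζ hq12 hE1 hE2 hE1W hE2W hi)

theorem stmt_18 {k : Type*} [Field k] [IsAlgClosed k] [CharZero k]
    (ζ : k) (hζ : IsPrimitiveRoot ζ 12)
    (q12 q21 : k) (hq12 : q12 ≠ 0) (hq21 : q21 ≠ 0) (hq : q12 * q21 = ζ ^ 11)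
    (lg1 lg2 : k) (hlg1 : lg1 ≠ 0) (hlg2 : lg2 ≠ 0)
    {V : Type*} [AddCommGroup V] [Module k V]
    -- basis indexed by v₀₀, v₀₁, v₁₁, v₂₁, v₂₂, v₃₂, v₄₂, v₃₃, v₄₃, v₅₃, v₅₄
    (b : Module.Basis (Fin 11) k V)
    (E1 E2 F1 F2 D : V →ₗ[k] V)
    (hE1 : ∀ i : Fin 11, E1 (b i) =
      ![0, b 2, b 3, 0, b 5, b 6, 0, (q12 * ζ ^ 8 * (ζ ^ 3 - 1) / 2) • b 8, b 9, 0, 0] i)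
    (hE2 : ∀ i : Fin 11, E2 (b i) =
      ![b 1, 0, 0, b 4, 0, b 7, b 8, 0, 0, b 10, 0] i)
    (hF1 : ∀ i : Fin 11, F1 (b i) = lg1 •
      ![0, 0, (q12 * (ζ - 1)) • b 1, (q12 * ζ ^ 8 * (1 + ζ ^ 3)) • b 2, 0,
        (q12 ^ 2 * (ζ ^ 2 - 1)) • b 4, (2 * q12 ^ 2 * (ζ ^ 2 - 1)) • b 5, 0,
        (2 * q12 ^ 2 * (ζ ^ 2 - 1)) • b 7, (q12 ^ 3 * ζ ^ 8 * (1 - ζ ^ 11)) • b 8, 0] i)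
    (hF2 : ∀ i : Fin 11, F2 (b i) = lg2 •
      ![0, (ζ ^ 11 - 1) • b 0, 0, 0, (q21 ^ 2 * (1 - ζ)) • b 3, 0, 0,
        (q21 ^ 3 * (ζ ^ 2 - 1)) • b 5, (q21 ^ 4 * (ζ ^ 3 - 1)) • b 6, 0,
        (q21 ^ 5 * (ζ ^ 11 + 1)) • b 9] i)
    -- the diagonal `Γ`-action: the eleven weights `λχ₁ⁱχ₂ʲ` are distinct
    (c : Fin 11 → k) (hc : Function.Injective c)
    (hD : ∀ i : Fin 11, D (b i) = c i • b i) :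
    ∀ W : Submodule k V,
      (∀ x ∈ W, E1 x ∈ W) → (∀ x ∈ W, E2 x ∈ W) →
      (∀ x ∈ W, F1 x ∈ W) → (∀ x ∈ W, F2 x ∈ W) →
      (∀ x ∈ W, D x ∈ W) →
      W = ⊥ ∨ W = ⊤ :=
  stmt_18_general ζ hζ q12 q21 hq12 hq21 lg1 lg2 hlg1 hlg2 b E1 E2 F1 F2 D hE1 hE2 hF1 hF2 c hc hD
end
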